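/- arXiv:1909.02947 — 10 statements merged into one kernel-verified Lean document; each statement's English description precedes it below -/
import Mathlib

section
/- Let A be an n×n real matrix with 1's on the diagonal, with the (1,n)-entry equal to b, and all other off-diagonal entries equal to a. Then the vector (c,1,1,...,1)^T, where c = 1 + (1/2)(-n + sqrt(n^2 + 4(b-a)/a)), is an eigenvector of A with eigenvalue λ = 1 - a + (a/2)(n + sqrt(n^2 + 4(b-a)/a)), provided a ≠ 0 and n^2 + 4(b-a)/a ≥ 0. -/
open Matrix

/-!
Write `A = (1 - a) I + a J + (b - a) E_pq` with `J` the all-ones matrix, and take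
`v = 1 + (c - 1) e_p`. Every row other than `p` gives the eigenvalue
`λ = 1 - a + a (c - 1 + n)` outright, while row `p` gives `λ c` exactly when `x = c - 1` solves
`a x (x + n) = b - a`; the stated `c` is built from the root `(-n + √(n² + 4(b - a)/a)) / 2`.
-/

namespace Matrix

variable {R ι : Type*} [CommRing R] [DecidableEq ι]

def uniformOffDiagWithEntry (a b : R) (p q : ι) : Matrix ι ι R :=
  of fun i j => if i = j then 1 else if i = p ∧ j = q then b else a

theorem uniformOffDiagWithEntry_apply (a b : R) {p q : ι} (hpq : p ≠ q) (i j : ι) :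
    uniformOffDiagWithEntry a b p q i j =
      (if i = j then 1 - a else 0) + a + if i = p ∧ j = q then b - a else 0 := by
  unfold uniformOffDiagWithEntry
  by_cases hij : i = j
  · subst hij
    have : ¬(i = p ∧ i = q) := fun h => hpq (h.1.symm.trans h.2)
    simp [this]
  · simp only [of_apply, hij, if_false]
    split_ifs <;> ring

variable [Fintype ι]

theorem mulVec_uniformOffDiagWithEntry_apply (a b : R) {p q : ι} (hpq : p ≠ q)
    (v : ι → R) (i : ι) :
    (uniformOffDiagWithEntry a b p q *ᵥ v) i =
      (1 - a) * v i + a * ∑ j, v j + if i = p then (b - a) * v q else 0 := by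
  simp only [mulVec, dotProduct, uniformOffDiagWithEntry_apply a b hpq, add_mul, ite_mul,
    zero_mul, Finset.sum_add_distrib, Finset.sum_ite_eq, Finset.mem_univ, if_true,
    ← Finset.mul_sum]
  by_cases hi : i = p <;> simp [hi]

theorem uniformOffDiagWithEntry_mulVec_update_one (a b : R) {p q : ι} (hpq : p ≠ q) {c : R}
    (hc : a * (c - 1) * (c - 1 + Fintype.card ι) = b - a) :
    uniformOffDiagWithEntry a b p q *ᵥ Function.update (1 : ι → R) p c =
      (1 - a + a * (c - 1 + Fintype.card ι)) • Function.update (1 : ι → R) p c := by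
  have hsum : ∑ j, Function.update (1 : ι → R) p c j = c - 1 + Fintype.card ι := by
    rw [Finset.sum_update_of_mem (Finset.mem_univ p)]
    simp only [Pi.one_apply, Finset.sum_const, Finset.card_sdiff, Finset.card_univ,
      Finset.inter_univ, Finset.card_singleton, nsmul_eq_mul, mul_one,
      Nat.cast_sub (Fintype.card_pos_iff.mpr ⟨p⟩), Nat.cast_one]
    ring
  ext i
  rw [mulVec_uniformOffDiagWithEntry_apply a b hpq, hsum, Pi.smul_apply, smul_eq_mul]
  by_cases hi : i = p
  · subst hi
    simp only [Function.update_self, Function.update_of_ne hpq.symm, Pi.one_apply, mul_one,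
      if_true]
    linear_combination -hc
  · simp [hi]

end Matrix

theorem stmt0 (n : ℕ) (hn : 2 ≤ n) (a b : ℝ) (ha : a ≠ 0)
    (hdisc : 0 ≤ (n : ℝ)^2 + 4 * ((b - a) / a)) :
    let A : Matrix (Fin n) (Fin n) ℝ := Matrix.of fun i j =>
      if i = j then 1 else if i.val = 0 ∧ j.val = n - 1 then b else a
    let c : ℝ := 1 + (1/2) * (-(n:ℝ) + Real.sqrt ((n:ℝ)^2 + 4 * ((b - a) / a)))
    let lam : ℝ := 1 - a + (a/2) * ((n:ℝ) + Real.sqrt ((n:ℝ)^2 + 4 * ((b - a) / a)))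
    let v : Fin n → ℝ := fun i => if i.val = 0 then c else 1
    A.mulVec v = lam • v := by
  intro A c lam v
  let p : Fin n := ⟨0, by omega⟩
  let q : Fin n := ⟨n - 1, by omega⟩
  have hpq : p ≠ q := by simp only [ne_eq, Fin.ext_iff, p, q]; omega
  have hA : A = uniformOffDiagWithEntry a b p q := by
    ext i j; simp [A, uniformOffDiagWithEntry, p, q, Fin.ext_iff]
  have hv : v = Function.update (1 : Fin n → ℝ) p c := by
    ext i; simp [v, Function.update_apply, p, Fin.ext_iff]
  have hroot : a * (c - 1) * (c - 1 + Fintype.card (Fin n)) = b - a := by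
    have hs2 : a * Real.sqrt ((n:ℝ)^2 + 4 * ((b - a) / a)) ^ 2 = a * n ^ 2 + 4 * (b - a) := by
      rw [Real.sq_sqrt hdisc]; field_simp
    simp only [Fintype.card_fin, c]
    linear_combination (1 / 4) * hs2
  have hlam : lam = 1 - a + a * (c - 1 + Fintype.card (Fin n)) := by
    simp only [Fintype.card_fin, lam, c]; ring
  rw [hA, hv, hlam]
  exact uniformOffDiagWithEntry_mulVec_update_one a b hpq hroot
end

section
/- Let G be a directed clique on a finite vertex set τ, i.e., there is a linear ordering of the vertices such that i → j whenever i < j. Then there exists a unique subset σ ⊆ τ such that σ is a clique (all-to-all bidirectionally connected) and σ has no target in τ (no vertex k ∈ τ \ σ with i → k for all i ∈ σ). -/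
/-!
Read the vertices from the top of the order down. A target-free clique `σ` of a directed clique
is forced to contain a vertex `k` exactly when every larger member of `σ` has a back edge to `k`:
larger members reach `k` only through back edges, and smaller vertices reach `k` anyway. This
recursion along the well-founded order `>` determines `σ` uniquely and also constructs it.
-/

namespace DirectedClique

variable {α : Type*} [LinearOrder α] (E : α → α → Prop)

def IsBidirClique (s : Finset α) : Prop :=
  ∀ i ∈ s, ∀ j ∈ s, i ≠ j → E i j

def IsTargetFree (s : Finset α) : Prop :=
  ∀ k, k ∉ s → ∃ i ∈ s, ¬ E i k

def IsTopDownGreedy (s : Finset α) : Prop :=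
  ∀ k, k ∈ s ↔ ∀ j ∈ s, k < j → E j k

theorem isBidirClique_and_isTargetFree_iff (hdc : ∀ i j, i < j → E i j) (s : Finset α) :
    IsBidirClique E s ∧ IsTargetFree E s ↔ IsTopDownGreedy E s := by
  constructor
  · rintro ⟨hclique, htf⟩ k
    refine ⟨fun hk j hj hkj => hclique j hj k hk hkj.ne', fun hback => ?_⟩
    by_contra hk
    obtain ⟨i, hi, hik⟩ := htf k hk
    rcases lt_trichotomy i k with hlt | rfl | hgt
    · exact hik (hdc i k hlt)
    · exact hk hi
    · exact hik (hback i hi hgt)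
  · intro hs
    refine ⟨fun i hi j hj hij => ?_, fun k hk => ?_⟩
    · rcases hij.lt_or_gt with hlt | hgt
      · exact hdc i j hlt
      · exact (hs j).1 hj i hi hgt
    · rw [hs k] at hk
      push Not at hk
      obtain ⟨j, hj, -, hjk⟩ := hk
      exact ⟨j, hj, hjk⟩

theorem IsTopDownGreedy.eq [WellFoundedGT α] {s t : Finset α}
    (hs : IsTopDownGreedy E s) (ht : IsTopDownGreedy E t) : s = t := by
  ext k
  induction k using WellFoundedGT.induction with
  | _ k ih =>
    rw [hs k, ht k]
    constructor
    · intro h j hj hkj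
      exact h j ((ih j hkj).2 hj) hkj
    · intro h j hj hkj
      exact h j ((ih j hkj).1 hj) hkj

def topDownGreedyMem [WellFoundedGT α] : α → Prop :=
  wellFounded_gt.fix fun k mem => ∀ j (hkj : k < j), mem j hkj → E j k

theorem topDownGreedyMem_iff [WellFoundedGT α] (k : α) :
    topDownGreedyMem E k ↔ ∀ j, k < j → topDownGreedyMem E j → E j k := by
  rw [topDownGreedyMem, WellFounded.fix_eq]

open Classical in
noncomputable def topDownGreedy [Fintype α] : Finset α :=
  Finset.univ.filter (topDownGreedyMem E)

theorem isTopDownGreedy_topDownGreedy [Fintype α] : IsTopDownGreedy E (topDownGreedy E) := by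
  intro k
  simp only [topDownGreedy, Finset.mem_filter, Finset.mem_univ, true_and]
  rw [topDownGreedyMem_iff]
  exact forall_congr' fun j => imp.swap

theorem existsUnique_isBidirClique_and_isTargetFree [Fintype α] (hdc : ∀ i j, i < j → E i j) :
    ∃! s : Finset α, IsBidirClique E s ∧ IsTargetFree E s := by
  simp only [isBidirClique_and_isTargetFree_iff E hdc]
  exact ⟨topDownGreedy E, isTopDownGreedy_topDownGreedy E,
    fun s hs => hs.eq E (isTopDownGreedy_topDownGreedy E)⟩

end DirectedClique

theorem stmt4_general (n : ℕ) (E : Fin n → Fin n → Prop)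
    (hdc : ∀ i j : Fin n, i < j → E i j) :
    ∃! σ : Finset (Fin n),
      (∀ i ∈ σ, ∀ j ∈ σ, i ≠ j → E i j) ∧
      (∀ k, k ∉ σ → ∃ i ∈ σ, ¬ E i k) :=
  DirectedClique.existsUnique_isBidirClique_and_isTargetFree E hdc

theorem stmt4 (n : ℕ) (hn : 0 < n) (E : Fin n → Fin n → Prop)
    (hirr : ∀ i, ¬ E i i) (hdc : ∀ i j : Fin n, i < j → E i j) :
    ∃! σ : Finset (Fin n),
      (∀ i ∈ σ, ∀ j ∈ σ, i ≠ j → E i j) ∧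
      (∀ k, k ∉ σ → ∃ i ∈ σ, ¬ E i k) :=
  stmt4_general n E hdc
end

section
/- Let G be a simple directed graph on n vertices with maximum in-degree d < n - 1, and let W be a CTLN matrix for G with parameters ε, δ satisfying 0 < ε < 1 and δ > εd/(n-1-d). Then I - W has an eigenvalue with negative real part (so -I + W is unstable). -/
/-!
The matrix `I - W` has positive entries since `ε < 1`, and the bound on `δ` makes each of its row
sums exceed `n`. By Perron's theorem `I - W` has a positive eigenvector; its eigenvalue `r` is
bounded below by the smallest row sum, so `r > n = tr (I - W)`. Since the complex eigenvalues,
counted with multiplicity, sum to the trace, the real parts of the others sum to `n - r < 0`.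
-/

open Matrix Finset

namespace Matrix

variable {ι : Type*} [Fintype ι]

section CollatzWielandt

variable [Nonempty ι]

noncomputable def collatzWielandt (A : Matrix ι ι ℝ) (x : ι → ℝ) : ℝ :=
  univ.inf' univ_nonempty fun i => (A *ᵥ x) i / x i

variable {A : Matrix ι ι ℝ} {x : ι → ℝ}

lemma collatzWielandt_mul_le (hx : ∀ i, 0 < x i) (i : ι) :
    A.collatzWielandt x * x i ≤ (A *ᵥ x) i :=
  (le_div_iff₀ (hx i)).mp (inf'_le _ (mem_univ i))

lemma lt_collatzWielandt {r : ℝ} (hx : ∀ i, 0 < x i) (h : ∀ i, r * x i < (A *ᵥ x) i) :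
    r < A.collatzWielandt x :=
  (lt_inf'_iff _).mpr fun i _ => (lt_div_iff₀ (hx i)).mpr (h i)

lemma collatzWielandt_smul {c : ℝ} (hc : c ≠ 0) (x : ι → ℝ) :
    A.collatzWielandt (c • x) = A.collatzWielandt x := by
  simp only [collatzWielandt, mulVec_smul, Pi.smul_apply, smul_eq_mul,
    mul_div_mul_left _ _ hc]

lemma continuousOn_collatzWielandt (A : Matrix ι ι ℝ) :
    ContinuousOn A.collatzWielandt {x | ∀ i, 0 < x i} :=
  ContinuousOn.finset_inf'_apply _ fun i _ =>
    ((continuous_apply i).comp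
      (Continuous.matrix_mulVec continuous_const continuous_id)).continuousOn.div
      (continuous_apply i).continuousOn fun _ hx => (hx i).ne'

end CollatzWielandt

variable {A : Matrix ι ι ℝ}

lemma mulVec_pos_of_pos (hA : ∀ i j, 0 < A i j) {x : ι → ℝ} (hx₀ : ∀ i, 0 ≤ x i) (hx : x ≠ 0)
    (i : ι) : 0 < (A *ᵥ x) i := by
  obtain ⟨j, hj⟩ := Function.ne_iff.mp hx
  exact Finset.sum_pos' (fun j _ => mul_nonneg (hA i j).le (hx₀ j))
    ⟨j, Finset.mem_univ j, mul_pos (hA i j) ((hx₀ j).lt_of_ne' hj)⟩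

lemma ne_zero_of_mem_stdSimplex {x : ι → ℝ} (hx : x ∈ stdSimplex ℝ ι) : x ≠ 0 := by
  rintro rfl
  simp [stdSimplex] at hx

/- Perron's theorem: maximise `x ↦ collatzWielandt A (A *ᵥ x)` on the simplex (precomposing with
`A` keeps it continuous up to the boundary); at a maximiser `x`, `A *ᵥ x` is an eigenvector. -/
theorem exists_pos_eigenvector_of_pos [Nonempty ι] (hA : ∀ i j, 0 < A i j) :
    ∃ (r : ℝ) (x : ι → ℝ), (∀ i, 0 < x i) ∧ A *ᵥ x = r • x := by
  classical
  have hApos {x : ι → ℝ} (hx : x ∈ stdSimplex ℝ ι) : ∀ i, 0 < (A *ᵥ x) i :=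
    mulVec_pos_of_pos hA hx.1 (ne_zero_of_mem_stdSimplex hx)
  have hcont : ContinuousOn (fun x => A.collatzWielandt (A *ᵥ x)) (stdSimplex ℝ ι) :=
    A.continuousOn_collatzWielandt.comp (Continuous.matrix_mulVec continuous_const
      continuous_id).continuousOn fun _ hx => hApos hx
  obtain ⟨x, hx, hmax⟩ := (isCompact_stdSimplex ℝ ι).exists_isMaxOn
    ⟨_, ite_eq_mem_stdSimplex ℝ (Classical.arbitrary ι)⟩ hcont
  set y := A *ᵥ x
  set r := A.collatzWielandt y
  have hy : ∀ i, 0 < y i := hApos hx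
  refine ⟨r, y, hy, ?_⟩
  by_contra hne
  have hgap : ∀ i, r * (A *ᵥ y) i < (A *ᵥ (A *ᵥ y)) i := by
    intro i
    have := mulVec_pos_of_pos hA (x := A *ᵥ y - r • y)
      (fun j => sub_nonneg.mpr (collatzWielandt_mul_le hy j)) (sub_ne_zero.mpr hne) i
    simpa [mulVec_sub, mulVec_smul] using this
  set s := ∑ i, y i
  have hs : 0 < s := Finset.sum_pos (fun i _ => hy i) Finset.univ_nonempty
  have hx' : s⁻¹ • y ∈ stdSimplex ℝ ι :=
    ⟨fun i => by simpa using mul_nonneg (inv_nonneg.mpr hs.le) (hy i).le,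
      by simp [← Finset.mul_sum, s, inv_mul_cancel₀ hs.ne']⟩
  have hle : A.collatzWielandt (A *ᵥ (s⁻¹ • y)) ≤ r := hmax hx'
  rw [mulVec_smul, collatzWielandt_smul (inv_ne_zero hs.ne')] at hle
  have hy₀ : y ≠ 0 := fun h => (hy (Classical.arbitrary ι)).ne' (congrFun h _)
  exact hle.not_gt (lt_collatzWielandt (mulVec_pos_of_pos hA (fun i => (hy i).le) hy₀) hgap)

lemma lt_of_mulVec_eq_smul_of_lt_sum [Nonempty ι] (hA : ∀ i j, 0 ≤ A i j) {r c : ℝ} {x : ι → ℝ}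
    (hx : ∀ i, 0 < x i) (hAx : A *ᵥ x = r • x) (hc : ∀ i, c < ∑ j, A i j) : c < r := by
  obtain ⟨i, -, hi⟩ := Finset.exists_min_image Finset.univ x Finset.univ_nonempty
  refine lt_of_mul_lt_mul_right ?_ (hx i).le
  calc c * x i < (∑ j, A i j) * x i := mul_lt_mul_of_pos_right (hc i) (hx i)
    _ = ∑ j, A i j * x i := Finset.sum_mul _ _ _
    _ ≤ ∑ j, A i j * x j :=
        Finset.sum_le_sum fun j _ => mul_le_mul_of_nonneg_left (hi j (Finset.mem_univ j)) (hA i j)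
    _ = r * x i := by simpa [mulVec, dotProduct] using congrFun hAx i

lemma mem_spectrum_of_mulVec_eq_smul {R : Type*} [CommRing R] [DecidableEq ι]
    {A : Matrix ι ι R} {r : R} {x : ι → R} (hx : x ≠ 0) (hAx : A *ᵥ x = r • x) :
    r ∈ spectrum R A := by
  rw [← spectrum_toLin']
  exact (Module.End.hasEigenvalue_of_hasEigenvector
    (Module.End.hasEigenvector_iff.mpr ⟨by simpa using hAx, hx⟩)).mem_spectrum

lemma exists_re_neg_mem_spectrum_map [DecidableEq ι] {A : Matrix ι ι ℝ} {r : ℝ}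
    (hr : r ∈ spectrum ℝ A) (htr : A.trace < r) :
    ∃ μ ∈ spectrum ℂ (A.map Complex.ofReal), μ.re < 0 := by
  change ∃ μ ∈ spectrum ℂ (A.map Complex.ofRealHom), μ.re < 0
  set B := A.map Complex.ofRealHom
  have hroot : (r : ℂ) ∈ B.charpoly.roots := by
    rw [Polynomial.mem_roots B.charpoly_monic.ne_zero, A.charpoly_map, Polynomial.IsRoot,
      ← Complex.ofRealHom_eq_coe, Polynomial.eval_map_apply,
      (mem_spectrum_iff_isRoot_charpoly.mp hr).eq_zero, map_zero]
  obtain ⟨t, ht⟩ := Multiset.exists_cons_of_mem hroot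
  have htrace : r + t.sum.re = A.trace := by
    have := congrArg Complex.re B.trace_eq_sum_roots_charpoly
    rw [ht, Multiset.sum_cons] at this
    simpa [B, Matrix.trace, Complex.re_sum] using this.symm
  obtain ⟨μ, hμt, hμ⟩ : ∃ μ ∈ t, μ.re < 0 := by
    by_contra! h
    have : 0 ≤ t.sum.re := by
      rw [← Complex.coe_reAddGroupHom, map_multiset_sum]
      exact Multiset.sum_nonneg fun _ hx => by
        obtain ⟨μ, hμ, rfl⟩ := Multiset.mem_map.mp hx
        exact h μ hμ
    linarith
  refine ⟨μ, mem_spectrum_of_isRoot_charpoly (Polynomial.isRoot_of_mem_roots ?_), hμ⟩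
  exact ht ▸ Multiset.mem_cons_of_mem hμt

end Matrix

section CTLN

variable {ι : Type*} [DecidableEq ι] (E : ι → ι → Prop) [DecidableRel E]

def ctlnMatrix (ε δ : ℝ) : Matrix ι ι ℝ :=
  Matrix.of fun i j => if i = j then 0 else if E j i then -1 + ε else -1 - δ

variable {E} {ε δ : ℝ}

lemma trace_one_sub_ctlnMatrix [Fintype ι] : (1 - ctlnMatrix E ε δ).trace = Fintype.card ι := by
  simp [ctlnMatrix, Matrix.trace]

lemma one_sub_ctlnMatrix_pos (hε : ε < 1) (hδ : -1 < δ) (i j : ι) :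
    0 < (1 - ctlnMatrix E ε δ) i j := by
  by_cases hij : i = j
  · simp [hij, ctlnMatrix]
  · by_cases hE : E j i <;>
      simp only [ctlnMatrix, Matrix.sub_apply, one_apply, of_apply, hij, hE, ↓reduceIte] <;> linarith

lemma one_sub_ctlnMatrix_apply (hirr : ∀ i, ¬ E i i) (i j : ι) :
    (1 - ctlnMatrix E ε δ) i j =
      1 + δ - (if i = j then δ else 0) - (if E j i then ε + δ else 0) := by
  by_cases hij : i = j
  · subst hij; simp [hirr, ctlnMatrix]
  · by_cases hE : E j i <;>
      simp only [ctlnMatrix, Matrix.sub_apply, one_apply, of_apply, hij, hE, ↓reduceIte] <;> ring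

lemma sum_one_sub_ctlnMatrix_row [Fintype ι] (hirr : ∀ i, ¬ E i i) (i : ι) :
    ∑ j, (1 - ctlnMatrix E ε δ) i j = Fintype.card ι * (1 + δ) - δ - #{j | E j i} * (ε + δ) := by
  simp only [one_sub_ctlnMatrix_apply hirr, sum_sub_distrib, sum_const, card_univ, nsmul_eq_mul,
    sum_ite_eq, mem_univ, ↓reduceIte, sum_ite]
  ring

lemma card_lt_sum_one_sub_ctlnMatrix_row [Fintype ι] (hirr : ∀ i, ¬ E i i) (hε : 0 ≤ ε)
    (hδ : 0 ≤ δ) {d : ℕ} (hgap : ε * d < (Fintype.card ι - 1 - d) * δ) (i : ι)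
    (hd : #{j | E j i} ≤ d) :
    (Fintype.card ι : ℝ) < ∑ j, (1 - ctlnMatrix E ε δ) i j := by
  rw [sum_one_sub_ctlnMatrix_row hirr]
  have : (#{j | E j i} : ℝ) ≤ d := by exact_mod_cast hd
  nlinarith [mul_le_mul_of_nonneg_right this (add_nonneg hε hδ)]

end CTLN

theorem stmt6 (n d : ℕ) (E : Fin n → Fin n → Prop) [DecidableRel E] (hirr : ∀ i, ¬ E i i)
    (hd : ∀ i : Fin n, Nat.card {j : Fin n // E j i} ≤ d) (hdn : d + 1 < n)
    (ε δ : ℝ) (hε : 0 < ε) (hε1 : ε < 1)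
    (hδ : ε * d / ((n : ℝ) - 1 - d) < δ) (hδ0 : 0 < δ) :
    let W : Matrix (Fin n) (Fin n) ℝ := Matrix.of fun i j =>
      if i = j then 0 else if E j i then -1 + ε else -1 - δ
    ∃ μ ∈ spectrum ℂ ((1 - W).map Complex.ofReal), μ.re < 0 := by
  intro W
  change ∃ μ ∈ spectrum ℂ ((1 - ctlnMatrix E ε δ).map Complex.ofReal), μ.re < 0
  have : Nonempty (Fin n) := ⟨⟨0, by omega⟩⟩
  have hgap : ε * d < (Fintype.card (Fin n) - 1 - d) * δ := by
    have hdn' : (d : ℝ) + 1 < n := by exact_mod_cast hdn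
    rw [Fintype.card_fin, ← div_lt_iff₀' (by linarith)]
    exact hδ
  have hA := one_sub_ctlnMatrix_pos (E := E) hε1 (by linarith : -1 < δ)
  obtain ⟨r, x, hx, hAx⟩ := Matrix.exists_pos_eigenvector_of_pos hA
  have hr : (Fintype.card (Fin n) : ℝ) < r :=
    Matrix.lt_of_mulVec_eq_smul_of_lt_sum (fun i j => (hA i j).le) hx hAx fun i =>
      card_lt_sum_one_sub_ctlnMatrix_row hirr hε.le hδ0.le hgap i
        (by simpa [Nat.card_eq_fintype_card, Fintype.card_subtype] using hd i)
  have hx₀ : x ≠ 0 := fun h => (hx ⟨0, by omega⟩).ne' (congrFun h _)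
  exact Matrix.exists_re_neg_mem_spectrum_map (Matrix.mem_spectrum_of_mulVec_eq_smul hx₀ hAx)
    (trace_one_sub_ctlnMatrix.trans_lt hr)
end

section
/- Let G be a simple directed graph on n vertices that is not a clique (some ordered pair (i,j), i≠j, with j ̸→ i), and let W = W(G,ε,δ) with 0 < ε < 1 and δ > (ε/(1-ε))·(n² - n - 1). Then I - W has an eigenvalue with negative real part, so -I + W is not a stable matrix. -/
/-!
`A = 1 - W` has all diagonal entries `1`, so its eigenvalues `λ` (with multiplicity) sum to `n`.
If they all satisfied `0 ≤ Re λ`, each `Re λ` would be at most `n`, hence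
`Re (tr (A * A)) = ∑ Re (λ ^ 2) ≤ ∑ (Re λ) ^ 2 ≤ n ^ 2`.
On the other hand `tr (A * A) = ∑ A k l * A l k`: every off-diagonal entry of `A` is at least
`1 - ε`, and the missing edge contributes an entry `1 + δ` to two of the terms; the lower bound
on `δ` makes this sum exceed `n ^ 2`.
-/

open Matrix Polynomial

lemma Multiset.sum_map_re_sq_le_sq_sum_map_re (s : Multiset ℂ) (hs : ∀ r ∈ s, 0 ≤ r.re) :
    (s.map fun r => (r ^ 2).re).sum ≤ (s.map Complex.re).sum ^ 2 := by
  set S := (s.map Complex.re).sum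
  have hle : ∀ r ∈ s, r.re ≤ S := fun r hr =>
    Multiset.single_le_sum (by simpa using hs) _ (Multiset.mem_map_of_mem _ hr)
  calc (s.map fun r => (r ^ 2).re).sum ≤ (s.map fun r => S * r.re).sum := by
        refine Multiset.sum_map_le_sum_map _ _ fun r hr => ?_
        rw [pow_two, Complex.mul_re]
        nlinarith [hs r hr, hle r hr, mul_self_nonneg r.im]
    _ = S ^ 2 := by rw [Multiset.sum_map_mul_left, pow_two]

namespace Matrix

variable {ι : Type*} [Fintype ι]

section DecidableEq

variable [DecidableEq ι]

section AlgClosed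

variable {K : Type*} [Field K] [IsAlgClosed K]

lemma det_scalar_sub_eq_prod_roots_charpoly (M : Matrix ι ι K) (w : K) :
    (scalar ι w - M).det = (M.charpoly.roots.map (w - ·)).prod := by
  rw [← eval_charpoly, (IsAlgClosed.splits _).eval_eq_prod_roots_of_monic M.charpoly_monic]

lemma det_scalar_add_eq_prod_roots_charpoly (M : Matrix ι ι K) (w : K) :
    (scalar ι w + M).det = (M.charpoly.roots.map (w + ·)).prod := by
  have hcard : Multiset.card M.charpoly.roots = Fintype.card ι := by
    rw [← (IsAlgClosed.splits _).natDegree_eq_card_roots, charpoly_natDegree_eq_dim]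
  have hneg : scalar ι w + M = -(scalar ι (-w) - M) := by
    rw [map_neg, neg_sub, sub_neg_eq_add, add_comm]
  have hroots :
      M.charpoly.roots.map (-w - ·) = (M.charpoly.roots.map (w + ·)).map Neg.neg := by
    rw [Multiset.map_map]
    exact Multiset.map_congr rfl fun r _ => by simp only [Function.comp_apply]; ring
  rw [hneg, det_neg, det_scalar_sub_eq_prod_roots_charpoly, hroots, Multiset.prod_map_neg,
    Multiset.card_map, ← hcard, ← mul_assoc, ← pow_add, Even.neg_one_pow ⟨_, rfl⟩,
    one_mul]

lemma charpoly_mul_self (M : Matrix ι ι K) :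
    (M * M).charpoly = ((M.charpoly.roots.map (· ^ 2)).map (X - C ·)).prod := by
  refine Polynomial.funext fun z => ?_
  obtain ⟨w, rfl⟩ := IsAlgClosed.exists_pow_nat_eq z two_pos
  have hfactor : scalar ι (w ^ 2) - M * M = (scalar ι w - M) * (scalar ι w + M) := by
    simp only [sub_mul, mul_add, (scalar_commute w (Commute.all w) M).eq, pow_two, map_mul]
    abel
  rw [eval_charpoly, hfactor, det_mul, det_scalar_sub_eq_prod_roots_charpoly,
    det_scalar_add_eq_prod_roots_charpoly, ← Multiset.prod_map_mul, eval_multiset_prod,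
    Multiset.map_map, Multiset.map_map]
  refine congrArg _ (Multiset.map_congr rfl fun r _ => ?_)
  simp only [Function.comp_apply, eval_sub, eval_X, eval_C]
  ring

lemma trace_mul_self_eq_sum_sq_roots_charpoly (M : Matrix ι ι K) :
    (M * M).trace = (M.charpoly.roots.map (· ^ 2)).sum := by
  rw [trace_eq_sum_roots_charpoly, charpoly_mul_self, roots_multiset_prod_X_sub_C]

end AlgClosed

lemma re_trace_mul_self_le_sq (M : Matrix ι ι ℂ) (hM : ∀ μ ∈ spectrum ℂ M, 0 ≤ μ.re) :
    (M * M).trace.re ≤ M.trace.re ^ 2 := by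
  have hroots : ∀ r ∈ M.charpoly.roots, 0 ≤ r.re := fun r hr =>
    hM r (mem_spectrum_iff_isRoot_charpoly.mpr (mem_roots'.mp hr).2)
  have hsq : (M * M).trace.re = (M.charpoly.roots.map fun r => (r ^ 2).re).sum := by
    simp [trace_mul_self_eq_sum_sq_roots_charpoly, ← Complex.coe_reAddGroupHom,
      map_multiset_sum, Multiset.map_map]
  have hsum : M.trace.re = (M.charpoly.roots.map Complex.re).sum := by
    simp [trace_eq_sum_roots_charpoly, ← Complex.coe_reAddGroupHom, map_multiset_sum]
  rw [hsq, hsum]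
  exact Multiset.sum_map_re_sq_le_sq_sum_map_re _ hroots

lemma trace_mul_self_le_sq_of_re_spectrum_nonneg (A : Matrix ι ι ℝ)
    (hA : ∀ μ ∈ spectrum ℂ (A.map Complex.ofReal), 0 ≤ μ.re) :
    (A * A).trace ≤ A.trace ^ 2 := by
  have htrace (B : Matrix ι ι ℝ) : (B.map Complex.ofReal).trace = B.trace := by
    simp [Matrix.trace]
  have hmul : A.map Complex.ofReal * A.map Complex.ofReal = (A * A).map Complex.ofReal :=
    (Matrix.map_mul (f := Complex.ofRealHom)).symm
  have h := re_trace_mul_self_le_sq _ hA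
  rwa [hmul, htrace, htrace, Complex.ofReal_re, Complex.ofReal_re] at h

end DecidableEq

lemma le_trace_mul_self_of_le_offDiag (A : Matrix ι ι ℝ) {c d : ℝ} (hc : 0 ≤ c)
    (hdiag : ∀ k, A k k = 1) (hoff : ∀ k l, k ≠ l → c ≤ A k l) {i j : ι} (hij : i ≠ j)
    (hd : d ≤ A i j) :
    Fintype.card ι + (Fintype.card ι ^ 2 - Fintype.card ι) * c ^ 2 + 2 * (c * (d - c)) ≤
      (A * A).trace := by
  classical
  set f : ι × ι → ℝ := fun p => A p.1 p.2 * A p.2 p.1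
  set g : ι × ι → ℝ := fun p => c ^ 2 + if p.1 = p.2 then 1 - c ^ 2 else 0
  have htrace : (A * A).trace = ∑ p, f p := by
    simp [f, Matrix.trace, Matrix.mul_apply, Fintype.sum_prod_type]
  have hg : ∑ p, g p = Fintype.card ι + (Fintype.card ι ^ 2 - Fintype.card ι) * c ^ 2 := by
    simp only [g, Finset.sum_add_distrib, Finset.sum_const, Finset.card_univ, Fintype.card_prod,
      nsmul_eq_mul, Nat.cast_mul, Fintype.sum_prod_type, Finset.sum_ite_eq, Finset.mem_univ,
      ↓reduceIte]
    ring
  have hgf : ∀ p, g p ≤ f p := by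
    rintro ⟨k, l⟩
    by_cases hkl : k = l
    · simp [f, g, hkl, hdiag]
    · simp only [f, g, if_neg hkl, add_zero, pow_two]
      exact mul_le_mul (hoff k l hkl) (hoff l k (Ne.symm hkl)) hc (hc.trans (hoff k l hkl))
  have hprod : c * d ≤ A i j * A j i := by
    nlinarith [hoff i j hij, hoff j i (Ne.symm hij)]
  have hgain : c * (d - c) ≤ f (i, j) - g (i, j) := by
    simp only [f, g, if_neg hij]
    linarith
  have hgain' : c * (d - c) ≤ f (j, i) - g (j, i) := by
    simp only [f, g, if_neg (Ne.symm hij)]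
    linarith
  have hpair : ((i, j) : ι × ι) ≠ (j, i) := fun h => hij (Prod.ext_iff.mp h).1
  calc _ ≤ ∑ p, g p + ∑ p ∈ {(i, j), (j, i)}, (f p - g p) := by
        rw [hg, Finset.sum_pair hpair]
        linarith
    _ ≤ ∑ p, g p + ∑ p, (f p - g p) := by
        gcongr
        · exact fun p _ _ => sub_nonneg.mpr (hgf p)
        · exact Finset.subset_univ _
    _ = (A * A).trace := by rw [htrace, Finset.sum_sub_distrib]; ring

end Matrix

theorem stmt7_general (n : ℕ) (E : Fin n → Fin n → Prop) [DecidableRel E]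
    (hnc : ∃ i j : Fin n, i ≠ j ∧ ¬ E i j)
    (ε δ : ℝ) (hε : 0 < ε) (hε1 : ε < 1)
    (hδ : ε / (1 - ε) * ((n : ℝ)^2 - n - 1) < δ) :
    let W : Matrix (Fin n) (Fin n) ℝ := Matrix.of fun i j =>
      if i = j then 0 else if E j i then -1 + ε else -1 - δ
    ∃ μ ∈ spectrum ℂ ((1 - W).map Complex.ofReal), μ.re < 0 := by
  intro W
  obtain ⟨i, j, hij, hEij⟩ := hnc
  by_contra! hspec
  have hn : (2 : ℝ) ≤ n := by
    exact_mod_cast (Fintype.card_fin n).symm.trans_ge (Fintype.one_lt_card_iff.mpr ⟨i, j, hij⟩)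
  have hδ' : ε * ((n : ℝ) ^ 2 - n - 1) < δ * (1 - ε) := by
    rwa [div_mul_eq_mul_div, div_lt_iff₀ (by linarith)] at hδ
  have hδ0 : 0 < δ := by
    nlinarith [mul_pos hε (by nlinarith : (0 : ℝ) < (n : ℝ) ^ 2 - n - 1)]
  have hdiag : ∀ k, (1 - W) k k = 1 := by simp [W]
  have hentry : ∀ k l, k ≠ l → (1 - W) k l = if E l k then 1 - ε else 1 + δ := by
    intro k l hkl
    simp only [W, Matrix.sub_apply, one_apply_ne hkl, of_apply, if_neg hkl]
    split_ifs <;> ring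
  have hoff : ∀ k l, k ≠ l → 1 - ε ≤ (1 - W) k l := by
    intro k l hkl
    rw [hentry k l hkl]
    split_ifs <;> linarith
  have hmissing : 1 + δ ≤ (1 - W) j i := by rw [hentry j i hij.symm, if_neg hEij]
  have hlower :=
    (1 - W).le_trace_mul_self_of_le_offDiag (by linarith) hdiag hoff hij.symm hmissing
  have hupper := (1 - W).trace_mul_self_le_sq_of_re_spectrum_nonneg hspec
  have htrace : (1 - W).trace = n := by simp [Matrix.trace, hdiag]
  rw [htrace] at hupper
  rw [Fintype.card_fin] at hlower
  -- `hlower` exceeds `n ^ 2` by more than `ε ^ 2 * (n ^ 2 - n - 2) ≥ 0`.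
  nlinarith [mul_nonneg (sq_nonneg ε) (by nlinarith : (0 : ℝ) ≤ (n : ℝ) ^ 2 - n - 2)]

theorem stmt7 (n : ℕ) (E : Fin n → Fin n → Prop) [DecidableRel E] (hirr : ∀ i, ¬ E i i)
    (hnc : ∃ i j : Fin n, i ≠ j ∧ ¬ E i j)
    (ε δ : ℝ) (hε : 0 < ε) (hε1 : ε < 1)
    (hδ : ε / (1 - ε) * ((n : ℝ)^2 - n - 1) < δ) :
    let W : Matrix (Fin n) (Fin n) ℝ := Matrix.of fun i j =>
      if i = j then 0 else if E j i then -1 + ε else -1 - δ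
    ∃ μ ∈ spectrum ℂ ((1 - W).map Complex.ofReal), μ.re < 0 :=
  stmt7_general n E hnc ε δ hε hε1 hδ
end

section
/- Let n ≥ 2 and let W be the CTLN matrix of the graph on n vertices that is a clique missing exactly one edge (say n ̸→ 1, all other ordered pairs have edges), with 0 < ε < 1 and δ > 0. Then the Perron-Frobenius eigenvalue of I - W equals ε + (1/2)(1-ε)(n + sqrt(n² + 4(δ+ε)/(1-ε))). -/
/-!
Write `I - W = (1 - ε) J + ε I + (δ + ε) e₁ eₙᵀ`. A vector `v = (a, 1, …, 1)` with `r = ∑ v` is then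
an eigenvector with eigenvalue `ε + (1 - ε) r` exactly when `(1 - ε) r (r - n) = δ + ε`; the larger
root of this quadratic gives the stated value and makes `v` positive. A positive eigenvector of a
nonnegative matrix carries the spectral radius: for `A u = μ u` one has `‖μ‖ |u| ≤ A |u|` entrywise,
and evaluating at a coordinate where `|u|` touches the least multiple of `v` dominating it
(Collatz–Wielandt) gives `‖μ‖ ≤ λ`.
-/
open Matrix

section CollatzWielandt

variable {ι : Type*} [Fintype ι]

theorem le_of_smul_le_mulVec_of_mulVec_eq_smul {A : Matrix ι ι ℝ} (hA : ∀ i j, 0 ≤ A i j)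
    {v : ι → ℝ} (hv : ∀ i, 0 < v i) {r : ℝ} (hAv : A *ᵥ v = r • v)
    {w : ι → ℝ} (hw : 0 ≤ w) (hw0 : w ≠ 0) {m : ℝ} (hmw : m • w ≤ A *ᵥ w) : m ≤ r := by
  obtain ⟨k, hk⟩ := Function.ne_iff.mp hw0
  obtain ⟨i, -, hi⟩ := Finset.univ.exists_max_image (fun j => w j / v j) ⟨k, Finset.mem_univ k⟩
  set t := w i / v i
  have hwt : w ≤ t • v := fun j => (div_le_iff₀ (hv j)).1 (hi j (Finset.mem_univ j))
  have ht : 0 < t := (div_pos ((hw k).lt_of_ne' hk) (hv k)).trans_le (hi k (Finset.mem_univ k))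
  have hwi : w i = t * v i := (div_mul_cancel₀ _ (hv i).ne').symm
  have key : m * (t * v i) ≤ r * (t * v i) := calc
    m * (t * v i) = (m • w) i := by simp [hwi]
    _ ≤ (A *ᵥ w) i := hmw i
    _ ≤ (A *ᵥ (t • v)) i := Finset.sum_le_sum fun j _ => mul_le_mul_of_nonneg_left (hwt j) (hA i j)
    _ = r * (t * v i) := by rw [mulVec_smul, hAv]; simp only [Pi.smul_apply, smul_eq_mul]; ring
  exact le_of_mul_le_mul_right key (mul_pos ht (hv i))

theorem norm_le_of_mem_spectrum_of_mulVec_eq_smul [DecidableEq ι] {A : Matrix ι ι ℝ}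
    (hA : ∀ i j, 0 ≤ A i j) {v : ι → ℝ} (hv : ∀ i, 0 < v i) {r : ℝ} (hAv : A *ᵥ v = r • v)
    {μ : ℂ} (hμ : μ ∈ spectrum ℂ (A.map Complex.ofReal)) : ‖μ‖ ≤ r := by
  rw [← spectrum_toLin', ← Module.End.hasEigenvalue_iff_mem_spectrum] at hμ
  obtain ⟨u, hu⟩ := hμ.exists_hasEigenvector
  have hAu : A.map Complex.ofReal *ᵥ u = μ • u := by simpa using hu.apply_eq_smul
  refine le_of_smul_le_mulVec_of_mulVec_eq_smul hA hv hAv (w := fun j => ‖u j‖)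
    (fun j => norm_nonneg _) ?_ fun i => ?_
  · obtain ⟨k, hk⟩ := Function.ne_iff.mp hu.2
    exact Function.ne_iff.mpr ⟨k, by simpa using hk⟩
  · calc ‖μ‖ * ‖u i‖ = ‖(A.map Complex.ofReal *ᵥ u) i‖ := by rw [hAu]; simp
      _ ≤ ∑ j, A i j * ‖u j‖ := norm_sum_le_of_le _ fun j _ => by
        simp [Real.norm_of_nonneg (hA i j)]

end CollatzWielandt

section CliqueMinusEdge

variable {ι : Type*} [DecidableEq ι]

/-- `I - W` for the CTLN of the complete graph on `ι` with the edge `q → p` removed. -/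
def cliqueMinusEdgeMatrix (p q : ι) (ε δ : ℝ) : Matrix ι ι ℝ :=
  of fun i j => if i = j then 1 else if i = p ∧ j = q then 1 + δ else 1 - ε

variable {p q : ι} {ε δ : ℝ}

theorem cliqueMinusEdgeMatrix_nonneg (hε : ε ≤ 1) (hδ : -1 ≤ δ) (i j : ι) :
    0 ≤ cliqueMinusEdgeMatrix p q ε δ i j := by
  simp only [cliqueMinusEdgeMatrix, of_apply]
  split_ifs <;> linarith

theorem cliqueMinusEdgeMatrix_apply (hpq : p ≠ q) (i j : ι) :
    cliqueMinusEdgeMatrix p q ε δ i j =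
      1 - ε + (if i = j then ε else 0) + if i = p ∧ j = q then δ + ε else 0 := by
  simp only [cliqueMinusEdgeMatrix, of_apply]
  split_ifs with hij hpq' <;> try ring1
  exact absurd (hpq'.1.symm.trans (hij.trans hpq'.2)) hpq

theorem cliqueMinusEdgeMatrix_mulVec [Fintype ι] (hpq : p ≠ q) (v : ι → ℝ) (i : ι) :
    (cliqueMinusEdgeMatrix p q ε δ *ᵥ v) i =
      (1 - ε) * ∑ j, v j + ε * v i + if i = p then (δ + ε) * v q else 0 := by
  simp only [mulVec, dotProduct, cliqueMinusEdgeMatrix_apply hpq, add_mul, ite_mul, zero_mul,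
    Finset.sum_add_distrib, ← Finset.mul_sum, Finset.sum_ite_eq, Finset.mem_univ, if_true, ite_and]
  split_ifs <;> simp

theorem cliqueMinusEdgeMatrix_mulVec_update_one [Fintype ι] (hpq : p ≠ q) {μ : ℝ}
    (hμ : (1 - ε) * μ * (μ - Fintype.card ι) = δ + ε) :
    cliqueMinusEdgeMatrix p q ε δ *ᵥ Function.update 1 p (μ - Fintype.card ι + 1) =
      (ε + (1 - ε) * μ) • Function.update (1 : ι → ℝ) p (μ - Fintype.card ι + 1) := by
  have hsum : ∑ j, Function.update (1 : ι → ℝ) p (μ - Fintype.card ι + 1) j = μ := by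
    simp [Finset.sum_update_of_mem, Finset.card_sdiff, Nat.cast_sub (Fintype.card_pos_iff.mpr ⟨p⟩)]
  ext i
  rw [cliqueMinusEdgeMatrix_mulVec hpq, hsum]
  by_cases hi : i = p
  · subst hi
    simp only [Function.update_self, Function.update_of_ne hpq.symm, Pi.one_apply, mul_one,
      if_true, Pi.smul_apply, smul_eq_mul]
    linear_combination -hμ
  · simp only [Function.update_of_ne hi, Pi.one_apply, mul_one, hi, if_false, add_zero,
      Pi.smul_apply, smul_eq_mul]
    ring

end CliqueMinusEdge

theorem add_sqrt_div_two_mul_sub (b c : ℝ) (h : 0 ≤ b ^ 2 + 4 * c) :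
    (b + √(b ^ 2 + 4 * c)) / 2 * ((b + √(b ^ 2 + 4 * c)) / 2 - b) = c := by
  linear_combination Real.sq_sqrt h / 4

theorem stmt8 (n : ℕ) (hn : 2 ≤ n) (ε δ : ℝ) (hε : 0 < ε) (hε1 : ε < 1) (hδ : 0 < δ) :
    let M : Matrix (Fin n) (Fin n) ℝ := Matrix.of fun i j =>
      if i = j then 1 else if i.val = 0 ∧ j.val = n - 1 then 1 + δ else 1 - ε
    let lam : ℝ := ε + (1/2) * (1-ε) * ((n:ℝ) + Real.sqrt ((n:ℝ)^2 + 4*(δ+ε)/(1-ε)))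
    (∃ v : Fin n → ℝ, v ≠ 0 ∧ M.mulVec v = lam • v) ∧
    ∀ μ ∈ spectrum ℂ (M.map Complex.ofReal), ‖μ‖ ≤ lam := by
  intro M lam
  let p : Fin n := ⟨0, by omega⟩
  let q : Fin n := ⟨n - 1, by omega⟩
  have hpq : p ≠ q := by simp only [ne_eq, Fin.ext_iff, p, q]; omega
  have hM : M = cliqueMinusEdgeMatrix p q ε δ := by
    ext i j; simp [M, cliqueMinusEdgeMatrix, p, q, Fin.ext_iff]
  set c := (δ + ε) / (1 - ε) with hc_def
  have hc : 0 ≤ c := div_nonneg (by linarith) (by linarith)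
  set r := ((n : ℝ) + √((n : ℝ) ^ 2 + 4 * c)) / 2 with hr_def
  have hr : (1 - ε) * r * (r - Fintype.card (Fin n)) = δ + ε := by
    rw [Fintype.card_fin, mul_assoc, add_sqrt_div_two_mul_sub _ _ (by positivity), hc_def]
    field_simp [(sub_pos.2 hε1).ne']
  have hnr : (n : ℝ) ≤ r := by
    have hn_le_sqrt : (n : ℝ) ≤ √((n : ℝ) ^ 2 + 4 * c) := Real.le_sqrt_of_sq_le (by linarith)
    linarith
  have hlam : lam = ε + (1 - ε) * r := by simp only [lam, hr_def, hc_def, mul_div_assoc]; ring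
  set v := Function.update (1 : Fin n → ℝ) p (r - Fintype.card (Fin n) + 1)
  have hv : ∀ i, 0 < v i := by
    intro i
    by_cases hi : i = p
    · simp only [v, hi, Function.update_self, Fintype.card_fin]; linarith
    · simp [v, hi]
  have hMv : M *ᵥ v = lam • v := by
    rw [hM, hlam]; exact cliqueMinusEdgeMatrix_mulVec_update_one hpq hr
  refine ⟨⟨v, fun h => (hv p).ne' (congrFun h p), hMv⟩, fun μ hμ => ?_⟩
  refine norm_le_of_mem_spectrum_of_mulVec_eq_smul (fun i j => ?_) hv hMv hμ
  rw [hM]; exact cliqueMinusEdgeMatrix_nonneg hε1.le (by linarith) i j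
end

section
/- The maximum, over all simple directed graphs G on n vertices, of the number of target-free cliques of G equals the maximum, over all simple undirected graphs H on n vertices, of the number of maximal cliques of H. -/
/-- `σ` is a target-free clique of the directed graph `E`. -/
def IsTFClique {n : ℕ} (E : Fin n → Fin n → Prop) (σ : Finset (Fin n)) : Prop :=
  (∀ i ∈ σ, ∀ j ∈ σ, i ≠ j → E i j) ∧ ∀ k, k ∉ σ → ∃ i ∈ σ, ¬ E i k

/-- `σ` is a maximal clique of the undirected graph `H`. -/
def IsMaxClique {n : ℕ} (H : SimpleGraph (Fin n)) (σ : Finset (Fin n)) : Prop :=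
  H.IsClique ↑σ ∧ ∀ τ : Finset (Fin n), H.IsClique ↑τ → σ ⊆ τ → σ = τ

/-- The undirected graph `G̃` of the directed graph `E`. -/
def mutualGraph {n : ℕ} (E : Fin n → Fin n → Prop) : SimpleGraph (Fin n) where
  Adj i j := i ≠ j ∧ E i j ∧ E j i
  symm := ⟨fun _ _ h => ⟨h.1.symm, h.2.2, h.2.1⟩⟩
  loopless := ⟨fun _ h => h.1 rfl⟩

lemma mutualGraph_adj {n : ℕ} {E : Fin n → Fin n → Prop} {i j : Fin n} :
    (mutualGraph E).Adj i j ↔ i ≠ j ∧ E i j ∧ E j i :=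
  Iff.rfl

lemma IsTFClique.isMaxClique_mutualGraph {n : ℕ} {E : Fin n → Fin n → Prop}
    {σ : Finset (Fin n)} (h : IsTFClique E σ) : IsMaxClique (mutualGraph E) σ := by
  obtain ⟨hclique, htarget⟩ := h
  refine ⟨fun i hi j hj hij =>
      mutualGraph_adj.mpr ⟨hij, hclique i hi j hj hij, hclique j hj i hi hij.symm⟩,
    fun τ hτ hστ => hστ.antisymm fun k hk => ?_⟩
  by_contra hkσ
  obtain ⟨i, hi, hik⟩ := htarget k hkσ
  exact hik (mutualGraph_adj.mp (hτ (hστ hi) hk (ne_of_mem_of_not_mem hi hkσ))).2.1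

lemma IsMaxClique.isTFClique_adj {n : ℕ} {H : SimpleGraph (Fin n)} {σ : Finset (Fin n)}
    (h : IsMaxClique H σ) : IsTFClique H.Adj σ := by
  obtain ⟨hclique, hmax⟩ := h
  refine ⟨fun i hi j hj hij => hclique hi hj hij, fun k hkσ => ?_⟩
  by_contra! htarget
  have hins : H.IsClique ↑(insert k σ) := by
    rw [Finset.coe_insert]
    exact hclique.insert fun i hi _ => (htarget i hi).symm
  exact hkσ (hmax _ hins (Finset.subset_insert k σ) ▸ Finset.mem_insert_self k σ)

lemma card_subtype_le_of_imp {α : Type*} [Finite α] {p q : α → Prop} (h : ∀ a, p a → q a) :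
    Nat.card {a // p a} ≤ Nat.card {a // q a} :=
  Nat.card_mono (Set.toFinite {a | q a}) h

theorem stmt10 (n : ℕ) :
    sSup {k : ℕ | ∃ E : Fin n → Fin n → Prop, (∀ i, ¬ E i i) ∧
        k = Nat.card {σ : Finset (Fin n) // IsTFClique E σ}} =
    sSup {k : ℕ | ∃ H : SimpleGraph (Fin n),
        k = Nat.card {σ : Finset (Fin n) // IsMaxClique H σ}} := by
  apply csSup_eq_csSup_of_forall_exists_le
  · rintro _ ⟨E, -, rfl⟩
    exact ⟨_, ⟨mutualGraph E, rfl⟩,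
      card_subtype_le_of_imp fun _ => IsTFClique.isMaxClique_mutualGraph⟩
  · rintro _ ⟨H, rfl⟩
    exact ⟨_, ⟨H.Adj, H.loopless.irrefl, rfl⟩,
      card_subtype_le_of_imp fun _ => IsMaxClique.isTFClique_adj⟩
end

section
/- Let G be a directed graph on n vertices. Then the number of target-free cliques of G is at most 3^{n/3} if n ≡ 0 (mod 3), at most 4·3^{⌊n/3⌋-1} if n ≡ 1 (mod 3), and at most 2·3^{⌊n/3⌋} if n ≡ 2 (mod 3). -/
/-!
Only bidirectional edges matter: a target-free clique of `E` is a maximal clique of the graph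
of bidirectional edges, so it suffices to prove the Moon–Moser bound for maximal cliques.
For that, let `v` minimise the number `t` of non-neighbours within the vertex set `S`. Every
maximal clique contains `v` or one of its `t` non-neighbours `w`, and the maximal cliques
through `w` are, after deleting `w`, maximal cliques of the neighbourhood of `w`, which has at
most `#S - 1 - t` vertices. Hence by induction there are at most
`(t + 1) * moonMoser (#S - 1 - t) ≤ moonMoser #S` maximal cliques in `S`.
-/

open Finset

/-- The largest product of a partition of `n`, which is the Moon–Moser bound. -/
def moonMoser : ℕ → ℕ
  | 0 => 1
  | 1 => 1
  | 2 => 2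
  | 3 => 3
  | 4 => 4
  | m + 5 => 3 * moonMoser (m + 2)

lemma moonMoser_le_succ (m : ℕ) : moonMoser m ≤ moonMoser (m + 1) := by
  induction m using Nat.strong_induction_on with
  | _ m ih =>
    match m with
    | 0 | 1 | 2 | 3 | 4 => decide
    | k + 5 => exact Nat.mul_le_mul_left 3 (ih (k + 2) (by omega))

lemma moonMoser_mono : Monotone moonMoser :=
  monotone_nat_of_le_succ moonMoser_le_succ

lemma two_mul_moonMoser_le (m : ℕ) : 2 * moonMoser m ≤ moonMoser (m + 2) := by
  induction m using Nat.strong_induction_on with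
  | _ m ih =>
    match m with
    | 0 | 1 | 2 | 3 | 4 => decide
    | k + 5 =>
      show 2 * (3 * moonMoser (k + 2)) ≤ 3 * moonMoser (k + 4)
      linarith [ih (k + 2) (by omega)]

lemma three_mul_moonMoser_le (m : ℕ) : 3 * moonMoser m ≤ moonMoser (m + 3) := by
  match m with
  | 0 | 1 => decide
  | k + 2 => exact le_rfl

lemma mul_moonMoser_le (k m : ℕ) : k * moonMoser m ≤ moonMoser (m + k) := by
  induction k using Nat.strong_induction_on generalizing m with
  | _ k ih =>
    match k with
    | 0 => simp
    | 1 => simpa using moonMoser_le_succ m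
    | 2 => exact two_mul_moonMoser_le m
    | 3 => exact three_mul_moonMoser_le m
    | 4 => linarith [two_mul_moonMoser_le m, two_mul_moonMoser_le (m + 2)]
    | j + 5 =>
      calc (j + 5) * moonMoser m ≤ 3 * ((j + 2) * moonMoser m) := by nlinarith
        _ ≤ 3 * moonMoser (m + (j + 2)) := Nat.mul_le_mul_left 3 (ih (j + 2) (by omega) m)
        _ ≤ moonMoser (m + (j + 5)) := three_mul_moonMoser_le _

-- `n / 3 - 1` truncates at `n = 1`, where the right-hand side is `4` rather than `moonMoser 1 = 1`.
lemma moonMoser_le (n : ℕ) :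
    moonMoser n ≤ if n % 3 = 0 then 3 ^ (n / 3) else
      if n % 3 = 1 then 4 * 3 ^ (n / 3 - 1) else 2 * 3 ^ (n / 3) := by
  induction n using Nat.strong_induction_on with
  | _ n ih =>
    match n with
    | 0 | 1 | 2 | 3 | 4 => decide
    | k + 5 =>
      have hmod : (k + 5) % 3 = (k + 2) % 3 := by omega
      have hdiv : (k + 5) / 3 = (k + 2) / 3 + 1 := by omega
      have := ih (k + 2) (by omega)
      show 3 * moonMoser (k + 2) ≤ _
      rw [hmod, hdiv]
      split_ifs at this ⊢
      · rw [pow_succ]; linarith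
      · obtain ⟨q, hq⟩ : ∃ q, (k + 2) / 3 = q + 1 := ⟨(k + 2) / 3 - 1, by omega⟩
        rw [hq] at this ⊢
        simp only [add_tsub_cancel_right, pow_succ] at this ⊢
        linarith
      · rw [pow_succ]; linarith

namespace SimpleGraph

variable {V : Type*} [DecidableEq V] (G : SimpleGraph V) [DecidableRel G.Adj]

def maximalCliquesIn (S : Finset V) : Finset (Finset V) :=
  S.powerset.filter fun σ => G.IsClique (σ : Set V) ∧ ∀ k ∈ S, k ∉ σ → ∃ i ∈ σ, ¬ G.Adj i k

variable {G}

lemma mem_maximalCliquesIn {S σ : Finset V} :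
    σ ∈ G.maximalCliquesIn S ↔
      σ ⊆ S ∧ G.IsClique (σ : Set V) ∧ ∀ k ∈ S, k ∉ σ → ∃ i ∈ σ, ¬ G.Adj i k := by
  simp [maximalCliquesIn]

lemma card_filter_adj_add_card_filter_compl_adj {S : Finset V} {v : V} (hv : v ∈ S) :
    #(S.filter (G.Adj v)) + #(S.filter (Gᶜ.Adj v)) = #S - 1 := by
  have hadj : S.filter (G.Adj v) = (S.erase v).filter (G.Adj v) := by
    rw [filter_erase, erase_eq_of_notMem (by simp)]
  have hcompl : S.filter (Gᶜ.Adj v) = (S.erase v).filter (¬ G.Adj v ·) := by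
    ext u
    simp only [mem_filter, compl_adj, mem_erase]
    tauto
  rw [hadj, hcompl, card_filter_add_card_filter_not, card_erase_of_mem hv]

lemma maximalCliquesIn_subset_biUnion {S : Finset V} {v : V} (hv : v ∈ S) :
    G.maximalCliquesIn S ⊆
      (insert v (S.filter (Gᶜ.Adj v))).biUnion fun w => (G.maximalCliquesIn S).filter (w ∈ ·) := by
  intro σ hσ
  obtain ⟨hσS, -, hmax⟩ := mem_maximalCliquesIn.mp hσ
  simp only [mem_biUnion, mem_insert, mem_filter]
  by_cases hvσ : v ∈ σ
  · exact ⟨v, Or.inl rfl, hσ, hvσ⟩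
  · obtain ⟨i, hiσ, hvi⟩ := hmax v hv hvσ
    refine ⟨i, Or.inr ⟨hσS hiσ, (compl_adj G v i).mpr ⟨?_, fun h => hvi h.symm⟩⟩, hσ, hiσ⟩
    rintro rfl
    exact hvσ hiσ

lemma card_filter_mem_maximalCliquesIn_le (S : Finset V) (w : V) :
    #((G.maximalCliquesIn S).filter (w ∈ ·)) ≤ #(G.maximalCliquesIn (S.filter (G.Adj w))) := by
  refine card_le_card_of_injOn (·.erase w) ?_ fun σ₁ h₁ σ₂ h₂ =>
    erase_injOn' w (mem_filter.mp h₁).2 (mem_filter.mp h₂).2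
  intro σ hσw
  obtain ⟨hσ, hwσ⟩ := mem_filter.mp hσw
  obtain ⟨hσS, hclique, hmax⟩ := mem_maximalCliquesIn.mp hσ
  refine mem_maximalCliquesIn.mpr ⟨fun x hx => ?_, hclique.subset (by simp), fun k hk hkσ => ?_⟩
  · obtain ⟨hxw, hxσ⟩ := mem_erase.mp hx
    exact mem_filter.mpr ⟨hσS hxσ, hclique hwσ hxσ (Ne.symm hxw)⟩
  · obtain ⟨hkS, hwk⟩ := mem_filter.mp hk
    obtain ⟨i, hiσ, hik⟩ := hmax k hkS fun h => hkσ (mem_erase.mpr ⟨hwk.ne', h⟩)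
    exact ⟨i, mem_erase.mpr ⟨by rintro rfl; exact hik hwk, hiσ⟩, hik⟩

theorem card_maximalCliquesIn_le (S : Finset V) : #(G.maximalCliquesIn S) ≤ moonMoser #S := by
  induction S using Finset.strongInduction with
  | _ S ih =>
    rcases S.eq_empty_or_nonempty with rfl | hS
    · exact (card_le_card (filter_subset _ _)).trans (by simp [moonMoser])
    obtain ⟨v, hv, hmin⟩ := S.exists_min_image (fun w => #(S.filter (Gᶜ.Adj w))) hS
    set t := #(S.filter (Gᶜ.Adj v))
    set W := insert v (S.filter (Gᶜ.Adj v))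
    have hWS : W ⊆ S := insert_subset hv (filter_subset _ _)
    have hW : #W = t + 1 := card_insert_of_notMem (by simp)
    have hthrough : ∀ w ∈ W, #((G.maximalCliquesIn S).filter (w ∈ ·)) ≤ moonMoser (#S - 1 - t) := by
      intro w hw
      have := card_filter_adj_add_card_filter_compl_adj (G := G) (hWS hw)
      have := hmin w (hWS hw)
      calc #((G.maximalCliquesIn S).filter (w ∈ ·))
          ≤ #(G.maximalCliquesIn (S.filter (G.Adj w))) := card_filter_mem_maximalCliquesIn_le S w
        _ ≤ moonMoser #(S.filter (G.Adj w)) := ih _ (filter_ssubset.mpr ⟨w, hWS hw, G.irrefl⟩)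
        _ ≤ moonMoser (#S - 1 - t) := moonMoser_mono (by omega)
    have ht : t + 1 ≤ #S := hW ▸ card_le_card hWS
    calc #(G.maximalCliquesIn S)
        ≤ #(W.biUnion fun w => (G.maximalCliquesIn S).filter (w ∈ ·)) :=
          card_le_card (maximalCliquesIn_subset_biUnion hv)
      _ ≤ (t + 1) * moonMoser (#S - 1 - t) := hW ▸ card_biUnion_le_card_mul _ _ _ hthrough
      _ ≤ moonMoser (#S - 1 - t + (t + 1)) := mul_moonMoser_le _ _
      _ = moonMoser #S := by congr 1; omega

end SimpleGraph

def bidirectionalGraph {V : Type*} (E : V → V → Prop) : SimpleGraph V :=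
  SimpleGraph.fromRel fun i j => E i j ∧ E j i

open Classical in
lemma IsTFClique.mem_maximalCliquesIn {n : ℕ} {E : Fin n → Fin n → Prop}
    {σ : Finset (Fin n)} (h : IsTFClique E σ) :
    σ ∈ (bidirectionalGraph E).maximalCliquesIn univ := by
  obtain ⟨hclique, htarget⟩ := h
  refine SimpleGraph.mem_maximalCliquesIn.mpr ⟨subset_univ σ, fun i hi j hj hij => ?_, ?_⟩
  · exact (SimpleGraph.fromRel_adj _ i j).mpr
      ⟨hij, Or.inl ⟨hclique i hi j hj hij, hclique j hj i hi hij.symm⟩⟩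
  · intro k _ hk
    obtain ⟨i, hi, hik⟩ := htarget k hk
    exact ⟨i, hi, fun h => by simp_all [bidirectionalGraph, SimpleGraph.fromRel_adj]⟩

theorem stmt11_general (n : ℕ) (E : Fin n → Fin n → Prop) :
    Nat.card {σ : Finset (Fin n) // IsTFClique E σ} ≤
      (if n % 3 = 0 then 3^(n/3) else
       if n % 3 = 1 then 4 * 3^(n/3 - 1) else 2 * 3^(n/3)) := by
  classical
  calc Nat.card {σ : Finset (Fin n) // IsTFClique E σ}
      = #(univ.filter (IsTFClique E)) := by rw [Nat.card_eq_fintype_card, Fintype.card_subtype]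
    _ ≤ #((bidirectionalGraph E).maximalCliquesIn univ) :=
        card_le_card fun σ hσ => (mem_filter.mp hσ).2.mem_maximalCliquesIn
    _ ≤ moonMoser n := by
        simpa using SimpleGraph.card_maximalCliquesIn_le (G := bidirectionalGraph E) univ
    _ ≤ _ := moonMoser_le n

theorem stmt11 (n : ℕ) (E : Fin n → Fin n → Prop) (hirr : ∀ i, ¬ E i i) :
    Nat.card {σ : Finset (Fin n) // IsTFClique E σ} ≤
      (if n % 3 = 0 then 3^(n/3) else
       if n % 3 = 1 then 4 * 3^(n/3 - 1) else 2 * 3^(n/3)) :=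
  stmt11_general n E
end

section
/- For every n ≥ 2, there exists a simple undirected graph on n vertices whose number of maximal cliques equals 3^{n/3} if n ≡ 0 (mod 3), 4·3^{⌊n/3⌋-1} if n ≡ 1 (mod 3), and 2·3^{⌊n/3⌋} if n ≡ 2 (mod 3). -/
/-! The complete multipartite graph with parts of sizes `s₁, …, sₘ`, i.e. the pullback of the
complete graph along the map sending a vertex to its part, has as maximal cliques exactly the
transversals of the parts, hence `∏ sᵢ` of them. Splitting `n` into parts of size 3 and one part
of size 2, 3 or 4 according to `n mod 3` gives the stated count. -/

open Finset SimpleGraph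

theorem SimpleGraph.isClique_comap_top_iff {V ι : Type*} (f : V → ι) (s : Set V) :
    (SimpleGraph.comap f ⊤).IsClique s ↔ s.InjOn f := by
  rw [Set.injOn_iff_pairwise_ne]
  rfl

section CompleteMultipartite

variable {n : ℕ} {ι : Type*} (f : Fin n → ι)

theorem isMaxClique_comap_top_image_section [Fintype ι] (g : ∀ a, {x // f x = a}) :
    IsMaxClique (SimpleGraph.comap f ⊤) (univ.image fun a => (g a : Fin n)) := by
  refine ⟨?_, fun τ hτ hsub => hsub.antisymm fun v hv => ?_⟩
  · rw [isClique_comap_top_iff, coe_image, coe_univ, Set.image_univ]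
    rintro _ ⟨a, rfl⟩ _ ⟨b, rfl⟩ hab
    rw [(g a).2, (g b).2] at hab
    rw [hab]
  · have hgv : (g (f v) : Fin n) ∈ τ := hsub (mem_image_of_mem _ (mem_univ _))
    have : v = g (f v) := (isClique_comap_top_iff f _).mp hτ hv hgv (g (f v)).2.symm
    exact this ▸ mem_image_of_mem _ (mem_univ _)

theorem IsMaxClique.exists_mem_comap_top (hf : Function.Surjective f) {σ : Finset (Fin n)}
    (h : IsMaxClique (SimpleGraph.comap f ⊤) σ) (a : ι) : ∃ x ∈ σ, f x = a := by
  by_contra! hne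
  obtain ⟨w, rfl⟩ := hf a
  have hcl : (SimpleGraph.comap f ⊤).IsClique ↑(insert w σ) := by
    rw [coe_insert]
    exact h.1.insert fun y hy _ hfy => hne y hy hfy.symm
  exact hne w ((h.2 _ hcl (subset_insert _ _)) ▸ mem_insert_self w σ) rfl

theorem card_isMaxClique_comap_top [Fintype ι] (hf : Function.Surjective f) :
    Nat.card {σ // IsMaxClique (SimpleGraph.comap f ⊤) σ} = ∏ a, Nat.card {x // f x = a} := by
  let F (g : ∀ a, {x // f x = a}) : {σ // IsMaxClique (SimpleGraph.comap f ⊤) σ} :=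
    ⟨_, isMaxClique_comap_top_image_section f g⟩
  have hF : Function.Bijective F := by
    constructor
    · intro g g' hgg'
      funext a
      have himage : (univ.image fun a => (g a : Fin n)) = univ.image fun a => (g' a : Fin n) :=
        congrArg Subtype.val hgg'
      have : (g a : Fin n) ∈ univ.image fun a => (g' a : Fin n) :=
        himage ▸ mem_image_of_mem _ (mem_univ a)
      obtain ⟨b, -, hb⟩ := mem_image.mp this
      obtain rfl : b = a := (g' b).2.symm.trans (hb ▸ (g a).2)
      exact Subtype.ext hb.symm
    · rintro ⟨σ, hσ⟩
      choose g hgσ hg using hσ.exists_mem_comap_top f hf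
      refine ⟨fun a => ⟨g a, hg a⟩, Subtype.ext <| Finset.ext fun v => ?_⟩
      simp only [F, mem_image, mem_univ, true_and]
      refine ⟨by rintro ⟨a, rfl⟩; exact hgσ a, fun hv => ⟨f v, ?_⟩⟩
      exact (isClique_comap_top_iff f _).mp hσ.1 (hgσ _) hv (hg _)
  rw [← Nat.card_congr (Equiv.ofBijective F hF), Nat.card_pi]

end CompleteMultipartite

theorem exists_card_isMaxClique_eq_prod {m n : ℕ} (s : Fin m → ℕ) (hs : ∀ i, 0 < s i)
    (hsum : ∑ i, s i = n) :
    ∃ H : SimpleGraph (Fin n), Nat.card {σ // IsMaxClique H σ} = ∏ i, s i := by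
  subst hsum
  let f (x : Fin (∑ i, s i)) : Fin m := (finSigmaFinEquiv.symm x).1
  have hf : Function.Surjective f := fun i =>
    ⟨finSigmaFinEquiv ⟨i, ⟨0, hs i⟩⟩, by simp [f]⟩
  refine ⟨SimpleGraph.comap f ⊤,
    (card_isMaxClique_comap_top f hf).trans (prod_congr rfl fun i _ => ?_)⟩
  have hfiber : {x // f x = i} ≃ {y : Σ j, Fin (s j) // y.1 = i} :=
    finSigmaFinEquiv.symm.subtypeEquiv fun _ => Iff.rfl
  rw [Nat.card_congr (hfiber.trans (Equiv.sigmaSubtype i)), Nat.card_eq_fintype_card,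
    Fintype.card_fin]

theorem exists_moonMoser_partition (n : ℕ) (hn : 2 ≤ n) :
    ∃ r k, 0 < r ∧ r + 3 * k = n ∧
      r * 3 ^ k = if n % 3 = 0 then 3^(n/3) else
        if n % 3 = 1 then 4 * 3^(n/3 - 1) else 2 * 3^(n/3) := by
  rcases (by omega : n % 3 = 0 ∨ n % 3 = 1 ∨ n % 3 = 2) with h | h | h
  · refine ⟨3, n / 3 - 1, by omega, by omega, ?_⟩
    rw [if_pos h, ← pow_succ']
    congr 1
    omega
  · exact ⟨4, n / 3 - 1, by omega, by omega, by simp [h]⟩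
  · exact ⟨2, n / 3, by omega, by omega, by simp [h]⟩

theorem stmt12 (n : ℕ) (hn : 2 ≤ n) :
    ∃ H : SimpleGraph (Fin n),
      Nat.card {σ : Finset (Fin n) // IsMaxClique H σ} =
        (if n % 3 = 0 then 3^(n/3) else
         if n % 3 = 1 then 4 * 3^(n/3 - 1) else 2 * 3^(n/3)) := by
  obtain ⟨r, k, hr, hsum, hcount⟩ := exists_moonMoser_partition n hn
  rw [← hcount]
  convert exists_card_isMaxClique_eq_prod (Fin.cons r fun _ : Fin k => 3)
    (Fin.cases hr fun _ => by norm_num) (by simpa [Fin.sum_cons, mul_comm] using hsum) using 3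
  simp [Fin.prod_cons]
end

section
/- Let n = 4, let 0 < ε < 1 and δ > ε/(1-ε), and let M be the 4×4 matrix with rows [1, 1+δ, 1+δ, 1-ε], [1-ε, 1, 1+δ, 1+δ], [1+δ, 1-ε, 1, 1+δ], [1-ε, 1+δ, 1-ε, 1]. Then the Perron-Frobenius eigenvalue of M is strictly greater than 4; consequently, since the sum of the eigenvalues is Tr(M) = 4, M has an eigenvalue with negative real part. -/
open Matrix Polynomial Filter
open scoped NNReal ENNReal ComplexConjugate

set_option linter.unusedSectionVars false
set_option linter.unusedVariables false

attribute [local instance] Matrix.linftyOpNormedRing Matrix.linftyOpNormedAlgebra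

noncomputable instance : CompleteSpace (Matrix (Fin 4) (Fin 4) ℂ) :=
  FiniteDimensional.complete ℂ _


lemma spectral_lower (A : Matrix (Fin 4) (Fin 4) ℂ) (c b : ℝ≥0)
    (h : ∀ m : ℕ, (c : ℝ)^m ≤ ‖A^m‖) (hbc : b < c) :
    ∃ μ ∈ spectrum ℂ A, (b : ℝ) < ‖μ‖ := by
  by_contra hcon
  push_neg at hcon
  have hb : spectralRadius ℂ A ≤ (b : ℝ≥0∞) := by
    refine iSup₂_le fun μ hμ => ?_
    have := hcon μ hμ
    exact_mod_cast ENNReal.coe_le_coe.mpr (by exact_mod_cast this)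
  have hc : (c : ℝ≥0∞) ≤ spectralRadius ℂ A := by
    refine ge_of_tendsto (spectrum.pow_nnnorm_pow_one_div_tendsto_nhds_spectralRadius A) ?_
    filter_upwards [eventually_ge_atTop 1] with m hm
    have h1 : (c : ℝ≥0)^m ≤ ‖A^m‖₊ := by
      rw [← NNReal.coe_le_coe]
      push_cast
      exact h m
    have h2 : ((c : ℝ≥0∞))^(m : ℕ) ≤ (‖A^m‖₊ : ℝ≥0∞) := by exact_mod_cast h1
    calc (c : ℝ≥0∞) = ((c : ℝ≥0∞) ^ (m : ℕ)) ^ (1 / (m : ℝ)) := by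
          rw [← ENNReal.rpow_natCast, ← ENNReal.rpow_mul, mul_one_div,
            div_self (by positivity), ENNReal.rpow_one]
      _ ≤ (‖A^m‖₊ : ℝ≥0∞) ^ (1 / (m : ℝ)) :=
          ENNReal.rpow_le_rpow h2 (by positivity)
  have := hc.trans hb
  exact absurd (ENNReal.coe_le_coe.mp this) (not_le.mpr hbc)

lemma pow_norm_lower {n : Type*} [Fintype n] [DecidableEq n]
    (Mr : Matrix n n ℝ) (x : n → ℝ) (c : ℝ) (i0 : n)
    (hM : ∀ i j, 0 ≤ Mr i j) (hc : 0 ≤ c)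
    (hx0 : ∀ i, 0 ≤ x i) (hx1 : ∀ i, x i ≤ 1) (hxi0 : x i0 = 1)
    (hMx : ∀ i, c * x i ≤ Mr.mulVec x i) (m : ℕ) :
    c ^ m ≤ ‖(Mr.map Complex.ofReal) ^ m‖ := by
  have hpowmap : (Mr.map Complex.ofReal) ^ m = (Mr ^ m).map Complex.ofReal := by
    have := map_pow (Complex.ofRealHom.mapMatrix : Matrix n n ℝ →+* Matrix n n ℂ) Mr m
    simp only [RingHom.mapMatrix_apply] at this
    exact this.symm
  have hnn : ∀ k, ∀ i j, 0 ≤ (Mr ^ k) i j := by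
    intro k
    induction k with
    | zero => intro i j; simp [Matrix.one_apply]; positivity
    | succ k ih =>
      intro i j
      rw [pow_succ]
      exact Finset.sum_nonneg fun l _ => mul_nonneg (ih i l) (hM l j)
  have hiter : ∀ k, ∀ i, c ^ k * x i ≤ (Mr ^ k).mulVec x i := by
    intro k
    induction k with
    | zero => intro i; simp
    | succ k ih =>
      intro i
      rw [show (Mr ^ (k+1)) = Mr * Mr ^ k from pow_succ' Mr k, ← Matrix.mulVec_mulVec]
      calc c ^ (k+1) * x i = c ^ k * (c * x i) := by ring
        _ ≤ c ^ k * Mr.mulVec x i := by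
            exact mul_le_mul_of_nonneg_left (hMx i) (by positivity)
        _ = ∑ j, Mr i j * (c ^ k * x j) := by
            simp only [Matrix.mulVec, dotProduct, Finset.mul_sum]
            exact Finset.sum_congr rfl fun j _ => by ring
        _ ≤ ∑ j, Mr i j * ((Mr ^ k).mulVec x j) := by
            exact Finset.sum_le_sum fun j _ =>
              mul_le_mul_of_nonneg_left (ih j) (hM i j)
        _ = Mr.mulVec ((Mr ^ k).mulVec x) i := by
            simp [Matrix.mulVec, dotProduct]
  have key : c ^ m ≤ ∑ j, ‖((Mr ^ m).map Complex.ofReal) i0 j‖ := by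
    calc c ^ m = c ^ m * x i0 := by rw [hxi0, mul_one]
      _ ≤ (Mr ^ m).mulVec x i0 := hiter m i0
      _ = ∑ j, (Mr ^ m) i0 j * x j := by simp [Matrix.mulVec, dotProduct]
      _ ≤ ∑ j, (Mr ^ m) i0 j := Finset.sum_le_sum fun j _ => by
          nlinarith [hnn m i0 j, hx1 j, hx0 j]
      _ ≤ ∑ j, ‖((Mr ^ m).map Complex.ofReal) i0 j‖ := Finset.sum_le_sum fun j _ => by
          simp [Matrix.map_apply, Complex.norm_real]
          exact le_abs_self _
  rw [hpowmap]
  refine key.trans ?_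
  rw [Matrix.linfty_opNorm_def]
  have : (∑ j, ‖((Mr ^ m).map Complex.ofReal) i0 j‖₊ : ℝ≥0) ≤
      (Finset.univ.sup fun i => ∑ j, ‖((Mr ^ m).map Complex.ofReal) i j‖₊) :=
    Finset.le_sup (f := fun i => ∑ j, ‖((Mr ^ m).map Complex.ofReal) i j‖₊) (Finset.mem_univ i0)
  calc ∑ j, ‖((Mr ^ m).map Complex.ofReal) i0 j‖
      = ((∑ j, ‖((Mr ^ m).map Complex.ofReal) i0 j‖₊ : ℝ≥0) : ℝ) := by push_cast; rfl
    _ ≤ _ := by exact_mod_cast this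


section Helpers

variable {n : Type*} [Fintype n] [DecidableEq n]

lemma eval_charpoly' (A : Matrix n n ℂ) (z : ℂ) :
    A.charpoly.eval z = (scalar n z - A).det := by
  rw [Matrix.charpoly, eval_det, matPolyEquiv_charmatrix]
  simp

lemma algmap_eq (A : Matrix n n ℂ) (z : ℂ) :
    algebraMap ℂ (Matrix n n ℂ) z - A = scalar n z - A := by
  congr 1

lemma mem_spectrum_iff_root (A : Matrix n n ℂ) (z : ℂ) :
    z ∈ spectrum ℂ A ↔ A.charpoly.IsRoot z := by
  rw [spectrum.mem_iff, IsRoot, eval_charpoly', algmap_eq,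
    Matrix.isUnit_iff_isUnit_det, isUnit_iff_ne_zero, not_ne_iff]

lemma scalar_sub_map (Mr : Matrix n n ℝ) (z : ℝ) :
    scalar n (z : ℂ) - Mr.map Complex.ofReal = (scalar n z - Mr).map Complex.ofReal := by
  ext i j
  by_cases h : i = j <;>
    simp [h, Matrix.scalar_apply, Matrix.map_apply, Matrix.diagonal, Complex.ofReal_sub]

lemma det_scalar_map (Mr : Matrix n n ℝ) (z : ℝ) :
    (scalar n (z : ℂ) - Mr.map Complex.ofReal).det
      = ((scalar n z - Mr).det : ℂ) := by
  rw [scalar_sub_map]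
  exact (RingHom.map_det Complex.ofRealHom _).symm

lemma conj_root_mem (Mr : Matrix n n ℝ) (z : ℂ)
    (hz : z ∈ ((Mr.map Complex.ofReal).charpoly).roots) :
    conj z ∈ ((Mr.map Complex.ofReal).charpoly).roots := by
  have hm : ((Mr.map Complex.ofReal).charpoly).Monic := Matrix.charpoly_monic _
  rw [mem_roots hm.ne_zero] at hz ⊢
  have hmap : (Mr.map Complex.ofReal).charpoly = (Mr.charpoly).map Complex.ofRealHom := by
    have := Matrix.charpoly_map Mr Complex.ofRealHom
    exact this
  rw [hmap, IsRoot, eval_map, show Complex.ofRealHom = algebraMap ℝ ℂ from rfl, ← aeval_def] at hz ⊢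
  rw [Polynomial.aeval_conj, hz, map_zero]

end Helpers

set_option maxHeartbeats 1000000 in
theorem aux_part2 (ε δ : ℝ) (hε : 0 < ε) (hε1 : ε < 1) (hδ : ε / (1 - ε) < δ)
    (M : Matrix (Fin 4) (Fin 4) ℝ)
    (hM : M = !![1, 1+δ, 1+δ, 1-ε;
         1-ε, 1, 1+δ, 1+δ;
         1+δ, 1-ε, 1, 1+δ;
         1-ε, 1+δ, 1-ε, 1])
    (key : ∃ μ ∈ spectrum ℂ (M.map Complex.ofReal), 4 < ‖μ‖) :
    ∃ μ ∈ spectrum ℂ (M.map Complex.ofReal), μ.re < 0 := by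
  have hδ' : ε < δ * (1 - ε) := by
    rw [div_lt_iff₀ (by linarith)] at hδ; linarith
  have hδ0 : 0 < δ := lt_trans (div_pos hε (by linarith)) hδ
  obtain ⟨μ0, hμ0mem, hμ0norm⟩ := key
  by_contra hcon
  push_neg at hcon
  set A := M.map Complex.ofReal with hA
  set p := A.charpoly with hp
  have hmono : p.Monic := Matrix.charpoly_monic A
  have hdeg : p.natDegree = 4 := by
    rw [hp]; simpa using Matrix.charpoly_natDegree_eq_dim A
  have hsplits : p.Splits := IsAlgClosed.splits p
  have hcard : p.roots.card = 4 := by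
    rw [splits_iff_card_roots] at hsplits; rw [hsplits, hdeg]
  have hsplits' : p.Splits := IsAlgClosed.splits p
  have hroots_spec : ∀ z, z ∈ p.roots ↔ z ∈ spectrum ℂ A := fun z => by
    rw [mem_spectrum_iff_root, mem_roots hmono.ne_zero]
  have hre : ∀ z ∈ p.roots, 0 ≤ z.re := fun z hz => hcon z ((hroots_spec z).mp hz)
  have htr : A.trace = 4 := by
    rw [hA, hM]
    simp [Matrix.trace, Matrix.diag, Fin.sum_univ_four, Matrix.map_apply]
    norm_num
  have hsum : p.roots.sum = 4 := by
    rw [← Matrix.trace_eq_sum_roots_charpoly, htr]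
  have hμ0root : μ0 ∈ p.roots := (hroots_spec μ0).mpr hμ0mem
  have hμ0sq : 16 < μ0.re^2 + μ0.im^2 := by
    have h1 : ‖μ0‖^2 = μ0.re^2 + μ0.im^2 := by
      rw [Complex.sq_norm, Complex.normSq_apply]; ring
    nlinarith [hμ0norm]
  have resum : ∀ (s : Multiset ℂ), (s.sum).re = ((s.map Complex.re).sum) :=
    fun s => map_multiset_sum Complex.reAddGroupHom s
  by_cases him : μ0.im = 0
  · have habs : ‖μ0‖ = |μ0.re| := by
      rw [show μ0 = (μ0.re : ℂ) from Complex.ext rfl (by simp [him])]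
      simp [Complex.norm_real]
    have h0 : 0 ≤ μ0.re := hre μ0 hμ0root
    have hre0 : 4 < μ0.re := by rwa [habs, abs_of_nonneg h0] at hμ0norm
    have hrest := Multiset.cons_erase hμ0root
    have hsum2 : (4 : ℂ) = μ0 + (p.roots.erase μ0).sum := by
      rw [← hsum]
      conv_lhs => rw [← hrest]
      rw [Multiset.sum_cons]
    have hr2 : 0 ≤ ((p.roots.erase μ0).sum).re := by
      rw [resum]
      apply Multiset.sum_nonneg
      intro r hr
      obtain ⟨z, hz, rfl⟩ := Multiset.mem_map.mp hr
      exact hre z (Multiset.mem_of_mem_erase hz)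
    have := congrArg Complex.re hsum2
    simp [Complex.add_re] at this
    linarith
  · set ν := (starRingEnd ℂ) μ0 with hν
    have hνroot : ν ∈ p.roots := conj_root_mem M μ0 hμ0root
    have hνne : ν ≠ μ0 := by
      rw [hν, Ne, Complex.conj_eq_iff_im]; exact him
    have hν1 : ν ∈ p.roots.erase μ0 := (Multiset.mem_erase_of_ne hνne).mpr hνroot
    have e1 := Multiset.cons_erase hμ0root
    have e2 := Multiset.cons_erase hν1
    have hcard2 : ((p.roots.erase μ0).erase ν).card = 2 := by
      rw [Multiset.card_erase_of_mem hν1, Multiset.card_erase_of_mem hμ0root, hcard]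
      rfl
    obtain ⟨γ, γ', hγγ'⟩ := Multiset.card_eq_two.mp hcard2
    have hR : p.roots = μ0 ::ₘ ν ::ₘ γ ::ₘ {γ'} := by
      rw [← e1, ← e2, hγγ']
      rfl
    have hγ : γ ∈ p.roots := by rw [hR]; simp
    have hγ' : γ' ∈ p.roots := by rw [hR]; simp
    have hprod : p = (X - C μ0) * ((X - C ν) * ((X - C γ) * (X - C γ'))) := by
      have h := hsplits'.eq_prod_roots_of_monic hmono
      rw [hR] at h
      simpa [Multiset.map_cons, Multiset.prod_cons, mul_assoc] using h
    have hev : ∀ z : ℝ, ((scalar (Fin 4) z - M).det : ℂ)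
        = ((z:ℂ) - μ0) * (((z:ℂ) - ν) * (((z:ℂ) - γ) * ((z:ℂ) - γ'))) := by
      intro z
      rw [← det_scalar_map, ← eval_charpoly', ← hp, hprod]
      simp
    have E1 := hev 1
    have Em1 := hev (-1)
    have E0 := hev 0
    have ES : μ0 + ν + γ + γ' = 4 := by
      rw [hR] at hsum
      simpa [Multiset.sum_cons, add_assoc] using hsum
    have hsq : μ0^2 + ν^2 + γ^2 + γ'^2
        = ((18 + 2 * (scalar (Fin 4) (0:ℝ) - M).det - (scalar (Fin 4) (1:ℝ) - M).det
            - (scalar (Fin 4) (-1:ℝ) - M).det : ℝ) : ℂ) := by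
      push_cast at E1 Em1 E0 ⊢
      linear_combination (μ0+ν+γ+γ'+4)*ES + E1 + Em1 - 2*E0
    have hT : (-15 : ℝ) < 18 + 2 * (scalar (Fin 4) (0:ℝ) - M).det
        - (scalar (Fin 4) (1:ℝ) - M).det - (scalar (Fin 4) (-1:ℝ) - M).det := by
      have hs0 : scalar (Fin 4) (0:ℝ) - M =
          !![-1, -(1+δ), -(1+δ), -(1-ε); -(1-ε), -1, -(1+δ), -(1+δ);
             -(1+δ), -(1-ε), -1, -(1+δ); -(1-ε), -(1+δ), -(1-ε), -1] := by
        subst hM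
        ext i j
        fin_cases i <;> fin_cases j <;>
          simp [Matrix.scalar_apply, Matrix.diagonal_apply] <;> ring
      have hs1 : scalar (Fin 4) (1:ℝ) - M =
          !![0, -(1+δ), -(1+δ), -(1-ε); -(1-ε), 0, -(1+δ), -(1+δ);
             -(1+δ), -(1-ε), 0, -(1+δ); -(1-ε), -(1+δ), -(1-ε), 0] := by
        subst hM
        ext i j
        fin_cases i <;> fin_cases j <;>
          simp [Matrix.scalar_apply, Matrix.diagonal_apply] <;> ring
      have hsm1 : scalar (Fin 4) (-1:ℝ) - M =
          !![-2, -(1+δ), -(1+δ), -(1-ε); -(1-ε), -2, -(1+δ), -(1+δ);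
             -(1+δ), -(1-ε), -2, -(1+δ); -(1-ε), -(1+δ), -(1-ε), -2] := by
        subst hM
        ext i j
        fin_cases i <;> fin_cases j <;>
          simp [Matrix.scalar_apply, Matrix.diagonal_apply] <;> ring
      have hd0 : (!![(-1:ℝ), -(1+δ), -(1+δ), -(1-ε); -(1-ε), -1, -(1+δ), -(1+δ);
             -(1+δ), -(1-ε), -1, -(1+δ); -(1-ε), -(1+δ), -(1-ε), -1]).det
          = 2*δ^3 + δ^4 + 10*ε*δ^2 + 4*ε*δ^3 + 7*ε^2*δ + 3*ε^3 - ε^3*δ - ε^4 := by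
        simp [Matrix.det_succ_row_zero, Fin.sum_univ_succ, Matrix.submatrix_apply,
          Fin.succAbove, Fin.castSucc, Fin.castAdd, Fin.castLE]
        ring
      have hd1 : (!![(0:ℝ), -(1+δ), -(1+δ), -(1-ε); -(1-ε), 0, -(1+δ), -(1+δ);
             -(1+δ), -(1-ε), 0, -(1+δ); -(1-ε), -(1+δ), -(1-ε), 0]).det
          = -3 - 7*δ - 6*δ^2 + δ^4 + 5*ε + 9*ε*δ + 12*ε*δ^2 + 4*ε*δ^3 - 3*ε^2
            + 3*ε^2*δ + 3*ε^3 - ε^3*δ - ε^4 := by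
        simp [Matrix.det_succ_row_zero, Fin.sum_univ_succ, Matrix.submatrix_apply,
          Fin.succAbove, Fin.castSucc, Fin.castAdd, Fin.castLE]
        ring
      have hdm1 : (!![(-2:ℝ), -(1+δ), -(1+δ), -(1-ε); -(1-ε), -2, -(1+δ), -(1+δ);
             -(1+δ), -(1-ε), -2, -(1+δ); -(1-ε), -(1+δ), -(1-ε), -2]).det
          = 5 - 7*δ + 2*δ^2 + 4*δ^3 + δ^4 + 5*ε - 3*ε*δ + 8*ε*δ^2 + 4*ε*δ^3
            + ε^2 + 11*ε^2*δ + 3*ε^3 - ε^3*δ - ε^4 := by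
        simp [Matrix.det_succ_row_zero, Fin.sum_univ_succ, Matrix.submatrix_apply,
          Fin.succAbove, Fin.castSucc, Fin.castAdd, Fin.castLE]
        ring
      rw [hs0, hs1, hsm1, hd0, hd1, hdm1]
      nlinarith [mul_nonneg hδ0.le (by linarith : (0:ℝ) ≤ 14 - 6*ε), sq_nonneg δ,
        sq_nonneg ε, hε, hε1, hδ0]
    have hsqre := congrArg Complex.re hsq
    have hsre := congrArg Complex.re ES
    have hre2 : ∀ w : ℂ, (w^2).re = w.re*w.re - w.im*w.im := fun w => by
      rw [pow_two, Complex.mul_re]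
    rw [Complex.add_re, Complex.add_re, Complex.add_re, hre2, hre2, hre2, hre2] at hsqre
    simp only [hν, Complex.conj_re, Complex.conj_im, Complex.ofReal_re] at hsqre
    simp only [Complex.add_re, hν, Complex.conj_re] at hsre
    norm_num at hsre
    have h0a : 0 ≤ μ0.re := hre μ0 hμ0root
    have h0u : 0 ≤ γ.re := hre γ hγ
    have h0u' : 0 ≤ γ'.re := hre γ' hγ'
    have ha2 : μ0.re ≤ 2 := by linarith
    nlinarith [hsqre, hT, hμ0sq, mul_nonneg h0a (by linarith : (0:ℝ) ≤ 2 - μ0.re),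
      mul_nonneg h0u h0u', sq_nonneg γ.im, sq_nonneg γ'.im]


set_option maxHeartbeats 1000000 in
theorem aux_key (ε δ : ℝ) (hε : 0 < ε) (hε1 : ε < 1) (hδ : ε / (1 - ε) < δ)
    (M : Matrix (Fin 4) (Fin 4) ℝ)
    (hM : M = !![1, 1+δ, 1+δ, 1-ε;
         1-ε, 1, 1+δ, 1+δ;
         1+δ, 1-ε, 1, 1+δ;
         1-ε, 1+δ, 1-ε, 1]) :
    ∃ μ ∈ spectrum ℂ (M.map Complex.ofReal), 4 < ‖μ‖ := by
  subst hM
  have hδ' : ε < δ * (1 - ε) := by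
    rw [div_lt_iff₀ (by linarith)] at hδ; linarith
  have hδ0 : 0 < δ := lt_trans (div_pos hε (by linarith)) hδ
  set M : Matrix (Fin 4) (Fin 4) ℝ := !![1, 1+δ, 1+δ, 1-ε;
         1-ε, 1, 1+δ, 1+δ;
         1+δ, 1-ε, 1, 1+δ;
         1-ε, 1+δ, 1-ε, 1] with hMdef
  have hnn : ∀ i j, 0 ≤ M i j := by
    intro i j
    fin_cases i <;> fin_cases j <;> simp [hMdef] <;> linarith
  have hMx : ∀ i, (4 + ε/2) * (![1,1,1,1-ε/2]) i ≤ M.mulVec ![1,1,1,1-ε/2] i := by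
    intro i
    fin_cases i <;>
      simp [hMdef, Matrix.mulVec, dotProduct, Fin.sum_univ_four] <;> nlinarith
  obtain ⟨μ, hmem, hμ⟩ := spectral_lower (M.map Complex.ofReal) ⟨4 + ε/2, by positivity⟩ 4
    (fun m => pow_norm_lower M ![1,1,1,1-ε/2] (4 + ε/2) 0 hnn (by positivity)
      (by intro i; fin_cases i <;> simp <;> linarith)
      (by intro i; fin_cases i <;> simp <;> linarith)
      (by simp) hMx m)
    (NNReal.coe_lt_coe.mp (by simp only [NNReal.coe_ofNat]; show (4:ℝ) < 4 + ε/2; linarith))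
  refine ⟨μ, hmem, ?_⟩
  have h4 : ((4 : ℝ≥0) : ℝ) = 4 := by norm_num
  linarith [hμ, h4.le]

theorem stmt14 (ε δ : ℝ) (hε : 0 < ε) (hε1 : ε < 1) (hδ : ε / (1 - ε) < δ) :
    let M : Matrix (Fin 4) (Fin 4) ℝ :=
      !![1, 1+δ, 1+δ, 1-ε;
         1-ε, 1, 1+δ, 1+δ;
         1+δ, 1-ε, 1, 1+δ;
         1-ε, 1+δ, 1-ε, 1]
    (∀ l : ℝ, ((∃ v : Fin 4 → ℝ, v ≠ 0 ∧ M.mulVec v = l • v) ∧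
        ∀ μ ∈ spectrum ℂ (M.map Complex.ofReal), ‖μ‖ ≤ l) → 4 < l) ∧
    ∃ μ ∈ spectrum ℂ (M.map Complex.ofReal), μ.re < 0 := by
  intro M
  have key := aux_key ε δ hε hε1 hδ M rfl
  constructor
  · rintro l ⟨-, hall⟩
    obtain ⟨μ, hm, h4⟩ := key
    exact lt_of_lt_of_le h4 (hall μ hm)
  · exact aux_part2 ε δ hε hε1 hδ M rfl key
end

section
/- Let G be a directed clique on [n] with vertex ordering 1,...,n (i→j whenever i<j), and suppose G is not a clique. Then there exist j,k ∈ [n] such that k graphically dominates j with respect to [n], i.e.: j→k, k̸→j, and for all i ∈ [n]\{j,k}, i→j implies i→k. -/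
/-!
Let `j` be the largest vertex with a missing back edge `k ↛ j` from some `k > j`. Every vertex
`i ≠ k` then has an edge to `k`: forward edges are all present, and a missing back edge `i ↛ k`
with `i > k > j` would contradict the maximality of `j`. So `k` dominates `j`, in the strong
sense that `k` receives an edge from every other vertex.
-/

theorem exists_lt_not_rel_of_forall_lt_rel {α : Type*} [LinearOrder α] {E : α → α → Prop}
    (hdc : ∀ i j, i < j → E i j) (hnc : ∃ p q, p ≠ q ∧ ¬E p q) :
    ∃ j k, j < k ∧ ¬E k j := by
  obtain ⟨p, q, hpq, hnE⟩ := hnc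
  exact ⟨q, p, (hpq.lt_or_gt.resolve_left fun h => hnE (hdc p q h)), hnE⟩

theorem exists_lt_not_rel_and_forall_ne_rel {α : Type*} [LinearOrder α] [Finite α] {E : α → α → Prop}
    (hdc : ∀ i j, i < j → E i j) (hnc : ∃ p q, p ≠ q ∧ ¬E p q) :
    ∃ j k, j < k ∧ ¬E k j ∧ ∀ i, i ≠ k → E i k := by
  obtain ⟨j, hjmax⟩ := (Set.toFinite {j | ∃ k, j < k ∧ ¬E k j}).exists_maximal
    (exists_lt_not_rel_of_forall_lt_rel hdc hnc)
  obtain ⟨k, hjk, hkj⟩ := hjmax.prop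
  refine ⟨j, k, hjk, hkj, fun i hik => ?_⟩
  rcases hik.lt_or_gt with hik | hki
  · exact hdc i k hik
  · by_contra hik
    exact hjmax.not_gt ⟨i, hki, hik⟩ hjk

theorem stmt19_general (n : ℕ) (E : Fin n → Fin n → Prop)
    (hdc : ∀ i j : Fin n, i < j → E i j)
    (hnc : ∃ p q : Fin n, p ≠ q ∧ ¬ E p q) :
    ∃ j k : Fin n, j ≠ k ∧ E j k ∧ ¬ E k j ∧
      ∀ i : Fin n, i ≠ j → i ≠ k → E i j → E i k := by
  obtain ⟨j, k, hjk, hkj, hk⟩ := exists_lt_not_rel_and_forall_ne_rel hdc hnc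
  exact ⟨j, k, hjk.ne, hdc j k hjk, hkj, fun i _ hik _ => hk i hik⟩

theorem stmt19 (n : ℕ) (E : Fin n → Fin n → Prop) (hirr : ∀ i, ¬ E i i)
    (hdc : ∀ i j : Fin n, i < j → E i j)
    (hnc : ∃ p q : Fin n, p ≠ q ∧ ¬ E p q) :
    ∃ j k : Fin n, j ≠ k ∧ E j k ∧ ¬ E k j ∧
      ∀ i : Fin n, i ≠ j → i ≠ k → E i j → E i k :=
  stmt19_general n E hdc hnc
end
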